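/- Let G = (V, (E_t)_{t∈[τ]}) be a temporal graph and (k_v)_{v∈V} natural numbers. For each E ⊆ {S ⊆ V : |S|=2}, let a(E) = |{t ∈ [τ] : E_t = E}| and let C(E) be the set of vertex covers of (V,E). Then there exists an activity timeline T consisting only of length-0 intervals, covering G, with at most k_v intervals per vertex v, if and only if there exist nonnegative integers X_E^S (for E ⊆ {S ⊆ V : |S|=2} and S ∈ C(E)) satisfying: (1) Σ_{S∈C(E)} X_E^S = a(E) for every E, and (2) Σ_E Σ_{S∈C(E), v∈S} X_E^S ≤ k_v for every v ∈ V. -/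

import Mathlib

/-!
A timeline of length-0 intervals is the same as a choice of a vertex cover `C t` of every layer
`E t`, the number of intervals of `v` being the number of times `t` with `v ∈ C t`. Such a
choice is recorded by the numbers `X_E^S = #{t | E t = E ∧ C t = S}`, and the constraints on the
timeline translate into (1) and (2). Conversely, the times with layer `E` can be handed out to
the covers `S` in any way that gives `S` exactly `X_E^S` of them, since (1) says the numbers
add up to the size of that fiber.
-/

def covers {V : Type*} {τ : ℕ} (E : Fin τ → SimpleGraph V)
    (T : Finset (V × Fin τ × Fin τ)) : Prop :=
  ∀ (t : Fin τ) (u v : V), (E t).Adj u v →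
    ∃ x ∈ T, (x.1 = u ∨ x.1 = v) ∧ x.2.1 ≤ t ∧ t ≤ x.2.2

def isTimeline {V : Type*} [DecidableEq V] {τ : ℕ} (k : ℕ)
    (T : Finset (V × Fin τ × Fin τ)) : Prop :=
  (∀ x ∈ T, x.2.1 ≤ x.2.2) ∧
  ∀ v : V, (T.filter (fun x => x.1 = v)).card ≤ k

open Finset

theorem card_filter_sigma_fst_eq {γ : Type*} [Fintype γ] [DecidableEq γ] (X : γ → ℕ) (c : γ) :
    #{p : Σ c, Fin (X c) | p.1 = c} = X c := by
  have : ({p : Σ c, Fin (X c) | p.1 = c} : Finset _) = ({c} : Finset γ).sigma fun _ => univ := by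
    ext ⟨a, i⟩
    simp
  simp [this]

section FiberCounting

variable {ι β γ : Type*} [Fintype ι] [Fintype γ] [DecidableEq β] [DecidableEq γ]

theorem exists_card_filter_and_eq (f : ι → β) (X : β → γ → ℕ)
    (hX : ∀ b, ∑ c, X b c = #{t | f t = b}) :
    ∃ g : ι → γ, ∀ b c, #{t | f t = b ∧ g t = c} = X b c := by
  have e (b : β) : {t // f t = b} ≃ Σ c, Fin (X b c) :=
    Fintype.equivOfCardEq (by simp [hX, Fintype.card_subtype])
  refine ⟨fun t => (e (f t) ⟨t, rfl⟩).1, fun b c => ?_⟩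
  rw [← card_filter_sigma_fst_eq (X b) c]
  refine card_bij' (fun t ht => e b ⟨t, (mem_filter.1 ht).2.1⟩) (fun p _ => ((e b).symm p).1)
    ?_ ?_ ?_ ?_
  · intro t ht
    obtain ⟨rfl, rfl⟩ := (mem_filter.1 ht).2
    simp
  · intro p hp
    obtain ⟨⟨t, rfl⟩, rfl⟩ := (e b).surjective p
    simpa using hp
  · simp
  · simp

theorem sum_card_filter_and_eq (f : ι → β) (g : ι → γ) (b : β) :
    ∑ c, #{t | f t = b ∧ g t = c} = #{t | f t = b} := by
  rw [card_eq_sum_card_fiberwise (f := g) (t := univ) fun _ _ => mem_univ _]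
  simp only [filter_filter]

theorem sum_sum_ite_card_filter_and_eq [Fintype β] (f : ι → β) (g : ι → γ) (p : γ → Prop)
    [DecidablePred p] :
    ∑ b, ∑ c, (if p c then #{t | f t = b ∧ g t = c} else 0) = #{t | p (g t)} := by
  rw [sum_comm, card_eq_sum_card_fiberwise (f := g) (t := univ) fun _ _ => mem_univ _]
  refine sum_congr rfl fun c _ => ?_
  rw [filter_filter]
  by_cases hc : p c
  · simp_rw [if_pos hc, and_comm (a := f _ = _), sum_card_filter_and_eq g f c]
    exact congrArg card (filter_congr fun t _ => by grind)
  · simp only [hc, if_false, sum_const_zero]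
    exact (card_eq_zero.2 (filter_eq_empty_iff.2 fun _ _ ⟨hp, hg⟩ => hc (hg ▸ hp))).symm

end FiberCounting

section Timeline

variable {V : Type*} [Fintype V] [DecidableEq V] {τ : ℕ}

def activeAt (T : Finset (V × Fin τ × Fin τ)) (t : Fin τ) : Finset V := {v | (v, t, t) ∈ T}

theorem isVertexCover_activeAt {E : Fin τ → SimpleGraph V} {T : Finset (V × Fin τ × Fin τ)}
    (hT : ∀ x ∈ T, x.2.1 = x.2.2) (hcov : covers E T) (t : Fin τ) :
    (E t).IsVertexCover ↑(activeAt T t) := by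
  intro u w huw
  obtain ⟨⟨x, a, b⟩, hx, hxuw, hat, htb⟩ := hcov t u w huw
  obtain rfl : a = b := hT _ hx
  obtain rfl : a = t := le_antisymm hat htb
  rcases hxuw with rfl | rfl <;> simp [activeAt, hx]

theorem card_filter_mem_activeAt_le (T : Finset (V × Fin τ × Fin τ)) (v : V) :
    #{t | v ∈ activeAt T t} ≤ #(T.filter (·.1 = v)) :=
  card_le_card_of_injOn (fun t => (v, t, t)) (fun t ht => by simpa [activeAt] using ht)
    fun _ _ _ _ h => congrArg (·.2.1) h

def lengthZeroTimeline (C : Fin τ → Finset V) : Finset (V × Fin τ × Fin τ) :=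
  {x | x.2.1 = x.2.2 ∧ x.1 ∈ C x.2.1}

theorem covers_lengthZeroTimeline {E : Fin τ → SimpleGraph V} {C : Fin τ → Finset V}
    (hC : ∀ t, (E t).IsVertexCover ↑(C t)) : covers E (lengthZeroTimeline C) := by
  intro t u w huw
  rcases hC t huw with h | h
  · exact ⟨(u, t, t), by simpa [lengthZeroTimeline] using h, by simp⟩
  · exact ⟨(w, t, t), by simpa [lengthZeroTimeline] using h, by simp⟩

theorem card_filter_fst_lengthZeroTimeline (C : Fin τ → Finset V) (v : V) :
    #((lengthZeroTimeline C).filter (·.1 = v)) = #{t | v ∈ C t} := by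
  refine card_nbij' (·.2.1) (fun t => (v, t, t)) ?_ ?_ ?_ ?_ <;>
    grind [lengthZeroTimeline, Set.MapsTo, Set.LeftInvOn, coe_filter]

theorem exists_lengthZero_timeline_iff (E : Fin τ → SimpleGraph V) (k : V → ℕ) :
    (∃ T : Finset (V × Fin τ × Fin τ), (∀ x ∈ T, x.2.1 = x.2.2) ∧
      (∀ v, #(T.filter (·.1 = v)) ≤ k v) ∧ covers E T) ↔
    ∃ C : Fin τ → Finset V, (∀ t, (E t).IsVertexCover ↑(C t)) ∧ ∀ v, #{t | v ∈ C t} ≤ k v := by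
  constructor
  · rintro ⟨T, hT, hk, hcov⟩
    exact ⟨activeAt T, isVertexCover_activeAt hT hcov,
      fun v => (card_filter_mem_activeAt_le T v).trans (hk v)⟩
  · rintro ⟨C, hC, hk⟩
    exact ⟨lengthZeroTimeline C, fun x hx => (mem_filter.1 hx).2.1,
      fun v => (card_filter_fst_lengthZeroTimeline C v).trans_le (hk v),
      covers_lengthZeroTimeline hC⟩

end Timeline

theorem exists_vertexCover_choice_iff {ι V : Type*} [Fintype ι] [Fintype V] [DecidableEq V]
    [DecidableEq (SimpleGraph V)] [Fintype (SimpleGraph V)] (E : ι → SimpleGraph V)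
    (k : V → ℕ) :
    (∃ C : ι → Finset V, (∀ t, (E t).IsVertexCover ↑(C t)) ∧ ∀ v, #{t | v ∈ C t} ≤ k v) ↔
    ∃ X : SimpleGraph V → Finset V → ℕ,
      (∀ G S, X G S ≠ 0 → G.IsVertexCover ↑S) ∧
      (∀ G, ∑ S, X G S = #{t | E t = G}) ∧
      ∀ v, ∑ G, ∑ S, (if v ∈ S then X G S else 0) ≤ k v := by
  constructor
  · rintro ⟨C, hC, hk⟩
    refine ⟨fun G S => #{t | E t = G ∧ C t = S}, fun G S hGS => ?_,
      sum_card_filter_and_eq E C, fun v => ?_⟩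
    · obtain ⟨t, ht⟩ := card_ne_zero.1 hGS
      obtain ⟨rfl, rfl⟩ := (mem_filter.1 ht).2
      exact hC t
    · rw [sum_sum_ite_card_filter_and_eq E C (v ∈ ·)]
      exact hk v
  · rintro ⟨X, hX, hsum, hk⟩
    obtain ⟨C, hCX⟩ := exists_card_filter_and_eq E X hsum
    refine ⟨C, fun t => hX _ _ ?_, fun v => ?_⟩
    · rw [← hCX]
      exact card_ne_zero.2 ⟨t, by simp⟩
    · rw [← sum_sum_ite_card_filter_and_eq E C (v ∈ ·)]
      simp_rw [hCX]
      exact hk v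

theorem stmt4 {V : Type*} [Fintype V] [DecidableEq V]
    [DecidableEq (SimpleGraph V)] [Fintype (SimpleGraph V)]
    (τ : ℕ) (E : Fin τ → SimpleGraph V) (k : V → ℕ) :
    (∃ T : Finset (V × Fin τ × Fin τ),
      (∀ x ∈ T, x.2.1 = x.2.2) ∧
      (∀ v : V, (T.filter (fun x => x.1 = v)).card ≤ k v) ∧
      covers E T) ↔
    (∃ X : SimpleGraph V → Finset V → ℕ,
      (∀ (G : SimpleGraph V) (S : Finset V), X G S ≠ 0 →
        ∀ u v, G.Adj u v → u ∈ S ∨ v ∈ S) ∧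
      (∀ G : SimpleGraph V, ∑ S : Finset V, X G S =
        (Finset.univ.filter fun t : Fin τ => E t = G).card) ∧
      (∀ v : V, ∑ G : SimpleGraph V, ∑ S : Finset V,
        (if v ∈ S then X G S else 0) ≤ k v)) :=
  (exists_lengthZero_timeline_iff E k).trans (exists_vertexCover_choice_iff E k)
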